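/- arXiv:2512.22033 — 3 statements merged into one kernel-verified Lean document; each statement's English description precedes it below -/
import Mathlib

section
/- For all m, n ≥ 3, the direct product graph K_m × P_n admits a self-identifying code (in fact the full vertex set is one). -/
open SimpleGraph Set

/-- Closed neighborhood of a vertex. -/
def cNbr {V : Type*} (G : SimpleGraph V) (v : V) : Set V := insert v (G.neighborSet v)

/-- `S` is a self-identifying code of `G`. -/
def IsSID {V : Type*} (G : SimpleGraph V) (S : Set V) : Prop :=
  S.Nonempty ∧ ∀ v : V, (cNbr G v ∩ S).Nonempty ∧
    (⋂ c ∈ cNbr G v ∩ S, cNbr G c) = {v}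

/-- Minimum cardinality of a self-identifying code. -/
noncomputable def gammaSID {V : Type*} (G : SimpleGraph V) : ℕ :=
  sInf {k | ∃ S : Set V, IsSID G S ∧ S.ncard = k}

/-- Direct product of the complete graph `K_m` with the path `P_n`. -/
def KmPn (m n : ℕ) : SimpleGraph (Fin m × Fin n) where
  Adj u w := u.1 ≠ w.1 ∧ ((u.2 : ℕ) + 1 = (w.2 : ℕ) ∨ (w.2 : ℕ) + 1 = (u.2 : ℕ))
  symm := ⟨fun u w h => ⟨h.1.symm, h.2.symm⟩⟩
  loopless := ⟨fun u h => h.1 rfl⟩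

/-- Direct product of the complete graph `K_m` with the cycle `C_n`. -/
def KmCn (m n : ℕ) : SimpleGraph (Fin m × ZMod n) where
  Adj u w := u.1 ≠ w.1 ∧ (u.2 + 1 = w.2 ∨ w.2 + 1 = u.2)
  symm := ⟨fun u w h => ⟨h.1.symm, h.2.symm⟩⟩
  loopless := ⟨fun u h => h.1 rfl⟩


/- Every vertex lies in the closed neighbourhood of each of its closed neighbours, so with the
whole vertex set as code the intersection at `v` always contains `v`, and any other vertex `w` in it
is a neighbour of `v`. It therefore suffices to find, for each edge `vw`, a neighbour `c` of `v`
whose closed neighbourhood misses `w`. In `K_m × P_n` take `c = (b, w₂)` with `b ∉ {v₁, w₁}`,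
which needs `m ≥ 3`: it is adjacent to `v` exactly as `w` is, but shares its level with `w`. -/

lemma mem_cNbr_comm {V : Type*} {G : SimpleGraph V} {v w : V} :
    w ∈ cNbr G v ↔ v ∈ cNbr G w := by
  simp only [cNbr, mem_insert_iff, mem_neighborSet, G.adj_comm, eq_comm]

lemma isSID_univ_of_forall_adj {V : Type*} [Nonempty V] {G : SimpleGraph V}
    (h : ∀ v w, G.Adj v w → ∃ c, G.Adj v c ∧ w ∉ cNbr G c) : IsSID G univ := by
  refine ⟨univ_nonempty, fun v => ⟨⟨v, mem_insert v _, trivial⟩, ?_⟩⟩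
  refine Subset.antisymm (fun w hw => ?_) ?_
  · simp only [inter_univ, mem_iInter] at hw
    rcases hw v (mem_insert v _) with rfl | hvw
    · rfl
    obtain ⟨c, hvc, hwc⟩ := h v w hvw
    exact absurd (hw c (Or.inr hvc)) hwc
  · simp only [inter_univ, singleton_subset_iff, mem_iInter]
    exact fun c hc => mem_cNbr_comm.mp hc

lemma KmPn.exists_adj_notMem_cNbr {m n : ℕ} (hm : 3 ≤ m) {v w : Fin m × Fin n}
    (hvw : (KmPn m n).Adj v w) : ∃ c, (KmPn m n).Adj v c ∧ w ∉ cNbr (KmPn m n) c := by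
  obtain ⟨b, hbv, hbw⟩ := Fin.exists_ne_and_ne_of_two_lt v.1 w.1 hm
  refine ⟨(b, w.2), ⟨Ne.symm hbv, hvw.2⟩, ?_⟩
  rintro (h | ⟨-, h⟩)
  · exact hbw (congrArg Prod.fst h).symm
  · simp at h

theorem stmt5 (m n : ℕ) (hm : 3 ≤ m) (hn : 3 ≤ n) :
    IsSID (KmPn m n) (Set.univ : Set (Fin m × Fin n)) := by
  have : Nonempty (Fin m × Fin n) := ⟨(⟨0, by omega⟩, ⟨0, by omega⟩)⟩
  exact isSID_univ_of_forall_adj fun _ _ => KmPn.exists_adj_notMem_cNbr hm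
end

section
/- Let m ≥ 3, n ≥ 7, and let S be a self-identifying code of K_m × P_n. Then for every j with 3 ≤ j ≤ n−4, the union of three consecutive columns satisfies |(C_{j−1} ∪ C_j ∪ C_{j+1}) ∩ S| ≥ m + 2. -/
open SimpleGraph Set

/-!
Let `A`, `B`, `C` be the rows of the codewords in the columns `j - 1`, `j`, `j + 1`. Separating
`(i, j)` from `(i, j ∓ 2)`, from `(i', j)` and from `(i', j + 1)`, and `(i, j ∓ 1)` from
`(i, j ∓ 3)`, by a codeword of its closed neighbourhood gives six local conditions on `A`, `B`, `C`
(the bounds on `j` make all these vertices exist). They alone force `|A| + |B| + |C| ≥ m + 2`.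
Separation from `(i', j + 1)` shows that `|A| ≤ 1` implies `|C| ≥ 2`, which settles the case where
`B` misses at most one row. If `B` misses two rows, separation within column `j` makes `A ∪ C`
every row, and separation from `(i, j ∓ 3)` puts into `A ∩ C` the row of `B` when `|B| = 1`, and
every row when `B = ∅`.
-/

namespace Finset

variable {α : Type*} {A B C : Finset α}

lemma two_le_card_of_card_le_one [Nontrivial α]
    (hAC : ∀ i i', i ≠ i' → (∃ t ∈ A, t ≠ i) ∨ ∃ t ∈ C, t ≠ i ∧ t ≠ i')
    (hA : A.card ≤ 1) : 2 ≤ C.card := by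
  obtain ⟨i, hi⟩ := card_le_one_iff_subset_singleton.1 hA
  have hC : ∀ i', i ≠ i' → ∃ t ∈ C, t ≠ i ∧ t ≠ i' := fun i' hi' =>
    (hAC i i' hi').resolve_left fun ⟨t, ht, hti⟩ => hti (mem_singleton.1 (hi ht))
  obtain ⟨i', hi'⟩ := exists_ne i
  obtain ⟨t, ht, hti, -⟩ := hC i' hi'.symm
  obtain ⟨t', ht', -, ht't⟩ := hC t hti.symm
  exact one_lt_card.2 ⟨t', ht', t, ht, ht't⟩

lemma two_le_card_add_card_inter [DecidableEq α] [Nontrivial α]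
    (hAB : ∀ i, i ∈ A ∨ ∃ t ∈ B, t ≠ i) (hCB : ∀ i, i ∈ C ∨ ∃ t ∈ B, t ≠ i) :
    2 ≤ B.card + (A ∩ C).card := by
  have hmem : ∀ i, B ⊆ {i} → i ∈ A ∩ C := fun i hi => by
    have hB : ¬∃ t ∈ B, t ≠ i := fun ⟨t, ht, hti⟩ => hti (mem_singleton.1 (hi ht))
    exact mem_inter.2 ⟨(hAB i).resolve_right hB, (hCB i).resolve_right hB⟩
  by_cases hb : 2 ≤ B.card
  · omega
  obtain ⟨z, hz⟩ := card_le_one_iff_subset_singleton.1 (by omega : B.card ≤ 1)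
  rcases B.eq_empty_or_nonempty with rfl | hB
  · obtain ⟨x, y, hxy⟩ := exists_pair_ne α
    have := one_lt_card.2 ⟨x, hmem x (empty_subset _), y, hmem y (empty_subset _), hxy⟩
    omega
  · have := card_pos.2 hB
    have := card_pos.2 ⟨z, hmem z hz⟩
    omega

lemma union_eq_univ_of_one_lt_card_compl [Fintype α] [DecidableEq α]
    (hBAC : ∀ i i', i ≠ i' → i ∈ B ∨ i' ∈ A ∨ i' ∈ C) (hB : 1 < Bᶜ.card) : A ∪ C = univ := by
  obtain ⟨i₁, hi₁, i₂, hi₂, h₁₂⟩ := one_lt_card.1 hB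
  rw [mem_compl] at hi₁ hi₂
  refine eq_univ_iff_forall.2 fun x => mem_union.2 ?_
  rcases eq_or_ne i₁ x with rfl | hx
  · exact (hBAC i₂ i₁ h₁₂.symm).resolve_left hi₂
  · exact (hBAC i₁ x hx).resolve_left hi₁

lemma card_add_two_le_card_add_card_add_card [Fintype α] [DecidableEq α] [Nontrivial α]
    (hBC : ∀ i, i ∈ B ∨ ∃ t ∈ C, t ≠ i) (hBA : ∀ i, i ∈ B ∨ ∃ t ∈ A, t ≠ i)
    (hBAC : ∀ i i', i ≠ i' → i ∈ B ∨ i' ∈ A ∨ i' ∈ C)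
    (hAB : ∀ i, i ∈ A ∨ ∃ t ∈ B, t ≠ i) (hCB : ∀ i, i ∈ C ∨ ∃ t ∈ B, t ≠ i)
    (hAC : ∀ i i', i ≠ i' → (∃ t ∈ A, t ≠ i) ∨ ∃ t ∈ C, t ≠ i ∧ t ≠ i') :
    Fintype.card α + 2 ≤ A.card + B.card + C.card := by
  have hC2 := two_le_card_of_card_le_one hAC
  by_cases hBu : B = univ
  · rw [hBu, card_univ]
    omega
  obtain ⟨i, hi⟩ := not_forall.1 (mt eq_univ_iff_forall.2 hBu)
  obtain ⟨t, htA, -⟩ := (hBA i).resolve_left hi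
  obtain ⟨t', htC, -⟩ := (hBC i).resolve_left hi
  have := card_pos.2 ⟨t, htA⟩
  have := card_pos.2 ⟨t', htC⟩
  by_cases hb : Fintype.card α ≤ B.card + 1
  · omega
  have hACu := union_eq_univ_of_one_lt_card_compl hBAC (by rw [card_compl]; omega)
  have hunion := card_union_add_card_inter A C
  rw [hACu, card_univ] at hunion
  have := two_le_card_add_card_inter hAB hCB
  omega

end Finset

lemma IsSID.exists_separating {V : Type*} {G : SimpleGraph V} {S : Set V} (hS : IsSID G S)
    {v w : V} (hwv : w ≠ v) : ∃ c ∈ cNbr G v ∩ S, w ∉ cNbr G c := by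
  by_contra! h
  have hw : w ∈ ⋂ c ∈ cNbr G v ∩ S, cNbr G c := mem_iInter₂.2 h
  rw [(hS.2 v).2] at hw
  exact hwv hw

namespace KmPn

variable {m n : ℕ} {S : Set (Fin m × Fin n)}

lemma mem_cNbr {v c : Fin m × Fin n} :
    c ∈ cNbr (KmPn m n) v ↔
      c = v ∨ v.1 ≠ c.1 ∧ ((v.2 : ℕ) + 1 = c.2 ∨ (c.2 : ℕ) + 1 = v.2) :=
  Iff.rfl

-- Columns are indexed by `ℕ`, so that `q ± 1` needs no bound proof; beyond `n` they are empty.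
def column (k : ℕ) : Set (Fin m × Fin n) := {p | (p.2 : ℕ) = k}

open Classical in
noncomputable def rowsInColumn (S : Set (Fin m × Fin n)) (k : ℕ) : Finset (Fin m) :=
  {r | ∃ p ∈ S, p.1 = r ∧ (p.2 : ℕ) = k}

lemma mem_rowsInColumn_of_mem {p : Fin m × Fin n} (hp : p ∈ S) : p.1 ∈ rowsInColumn S p.2 := by
  classical
  simp only [rowsInColumn, Finset.mem_filter, Finset.mem_univ, true_and]
  exact ⟨p, hp, rfl, rfl⟩

lemma separate_from_two_left (hS : IsSID (KmPn m n) S) (i : Fin m) {q : ℕ} (hq2 : 2 ≤ q)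
    (hq : q < n) :
    i ∈ rowsInColumn S q ∨ ∃ t ∈ rowsInColumn S (q + 1), t ≠ i := by
  obtain ⟨c, ⟨hcv, hcS⟩, hcw⟩ := hS.exists_separating (v := (i, ⟨q, hq⟩))
    (w := (i, ⟨q - 2, by omega⟩)) (by simp [Fin.ext_iff]; omega)
  have hc := mem_rowsInColumn_of_mem hcS
  simp only [mem_cNbr, Prod.ext_iff, Fin.ext_iff] at hcv hcw
  grind

lemma separate_from_two_right (hS : IsSID (KmPn m n) S) (i : Fin m) {q : ℕ} (hq : q + 2 < n) :
    i ∈ rowsInColumn S q ∨ ∃ t ∈ rowsInColumn S (q - 1), t ≠ i := by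
  obtain ⟨c, ⟨hcv, hcS⟩, hcw⟩ := hS.exists_separating (v := (i, ⟨q, by omega⟩))
    (w := (i, ⟨q + 2, hq⟩)) (by simp [Fin.ext_iff])
  have hc := mem_rowsInColumn_of_mem hcS
  simp only [mem_cNbr, Prod.ext_iff, Fin.ext_iff] at hcv hcw
  grind

lemma separate_in_column (hS : IsSID (KmPn m n) S) {i i' : Fin m} (hii' : i ≠ i') {q : ℕ}
    (hq : q < n) :
    i ∈ rowsInColumn S q ∨ i' ∈ rowsInColumn S (q - 1) ∨ i' ∈ rowsInColumn S (q + 1) := by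
  obtain ⟨c, ⟨hcv, hcS⟩, hcw⟩ := hS.exists_separating (v := (i, ⟨q, hq⟩))
    (w := (i', ⟨q, hq⟩)) (by simp [hii'.symm])
  have hc := mem_rowsInColumn_of_mem hcS
  simp only [mem_cNbr, Prod.ext_iff, Fin.ext_iff] at hcv hcw
  grind

lemma separate_from_next_column (hS : IsSID (KmPn m n) S) {i i' : Fin m} (hii' : i ≠ i') {q : ℕ}
    (hq : q + 1 < n) :
    (∃ t ∈ rowsInColumn S (q - 1), t ≠ i) ∨ ∃ t ∈ rowsInColumn S (q + 1), t ≠ i ∧ t ≠ i' := by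
  obtain ⟨c, ⟨hcv, hcS⟩, hcw⟩ := hS.exists_separating (v := (i, ⟨q, by omega⟩))
    (w := (i', ⟨q + 1, hq⟩)) (by simp [Fin.ext_iff])
  have hc := mem_rowsInColumn_of_mem hcS
  simp only [mem_cNbr, Prod.ext_iff, Fin.ext_iff] at hcv hcw
  grind

lemma ncard_column_inter (k : ℕ) :
    (column k ∩ S).ncard = (rowsInColumn S k).card := by
  classical
  have himage : (rowsInColumn S k : Set (Fin m)) = Prod.fst '' (column k ∩ S) := by
    ext r
    simp only [rowsInColumn, Finset.coe_filter, Finset.mem_univ, true_and, column, mem_ofPred_eq,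
      mem_image, mem_inter_iff]
    grind
  rw [← Set.ncard_coe_finset, himage]
  exact (InjOn.ncard_image fun p hp p' hp' h => Prod.ext h (Fin.ext (hp.1.trans hp'.1.symm))).symm

lemma ncard_three_columns_inter {k : ℕ} (hk : 1 ≤ k) :
    ((column (k - 1) ∪ column k ∪ column (k + 1)) ∩ S).ncard =
      (rowsInColumn S (k - 1)).card + (rowsInColumn S k).card + (rowsInColumn S (k + 1)).card := by
  have hdisj {a b : ℕ} (hab : a ≠ b) :
      Disjoint (column a ∩ S) (column b ∩ S) :=
    Set.disjoint_left.2 fun p hpa hpb => hab (hpa.1.symm.trans hpb.1)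
  rw [union_inter_distrib_right, union_inter_distrib_right, ncard_union_eq, ncard_union_eq,
    ncard_column_inter, ncard_column_inter, ncard_column_inter]
  · exact hdisj (by omega)
  · exact Set.disjoint_union_left.2 ⟨hdisj (by omega), hdisj (by omega)⟩

end KmPn

open KmPn in
theorem stmt12 (m n : ℕ) (hm : 3 ≤ m) (S : Set (Fin m × Fin n))
    (hS : IsSID (KmPn m n) S) (j : ℕ) (hj1 : 3 ≤ j) (hj2 : j ≤ n - 4) :
    m + 2 ≤ (({p : Fin m × Fin n | p.2 = (⟨j - 1, by omega⟩ : Fin n)} ∪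
        {p : Fin m × Fin n | p.2 = (⟨j, by omega⟩ : Fin n)} ∪
        {p : Fin m × Fin n | p.2 = (⟨j + 1, by omega⟩ : Fin n)}) ∩ S).ncard := by
  have : Nontrivial (Fin m) := Fin.nontrivial_iff_two_le.2 (by omega)
  have hcount := Finset.card_add_two_le_card_add_card_add_card
    (A := rowsInColumn S (j - 1)) (B := rowsInColumn S j) (C := rowsInColumn S (j + 1))
    (fun i => separate_from_two_left hS i (q := j) (by omega) (by omega))
    (fun i => separate_from_two_right hS i (q := j) (by omega))
    (fun i i' hii' => separate_in_column hS hii' (q := j) (by omega))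
    (fun i => by simpa [Nat.sub_add_cancel (by omega : 1 ≤ j)] using
      separate_from_two_left hS i (q := j - 1) (by omega) (by omega))
    (fun i => by simpa using separate_from_two_right hS i (q := j + 1) (by omega))
    (fun i i' hii' => separate_from_next_column hS hii' (q := j) (by omega))
  simp only [Fin.ext_iff]
  rw [← column, ← column, ← column, ncard_three_columns_inter (by omega)]
  simpa using hcount
end

section
/- For all m, n ≥ 3 and any self-identifying code S of K_m × C_n and any column index j (mod n), the three consecutive columns satisfy |(C_{j−1} ∪ C_j ∪ C_{j+1}) ∩ S| ≥ m + 2. -/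
open SimpleGraph Set

/-!
Write `A`, `B`, `C` for the sets of rows carrying a codeword in columns `j - 1`, `j`, `j + 1`.
Separating suitable pairs of vertices gives local constraints: a vertex `(i, k)` outside `S`
forces codewords in other rows of both columns `k ± 1` (separate it from `(i, k ∓ 2)`) and a
codeword in column `k - 1` or `k + 1` of every other row `t` (separate it from `(t, k)`), and every
vertex has two codewords among its neighbours. If at most one row misses `B`, the last fact
gives `|A| + |C| ≥ 3`, which suffices. Otherwise two rows missing `B` force `A ∪ C` to be all
rows, so `|A| + |C| ≥ m + |A ∩ C|`, and the first fact puts the rows of a `B` with at most one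
element into `A ∩ C`.
-/

open scoped Finset

lemma mem_cNbr {V : Type*} {G : SimpleGraph V} {v w : V} :
    w ∈ cNbr G v ↔ w = v ∨ G.Adj v w := Iff.rfl

namespace IsSID

variable {V : Type*} {G : SimpleGraph V} {S : Set V} {u v : V}

theorem exists_mem_cNbr_notMem_cNbr (hS : IsSID G S) (huv : u ≠ v) :
    ∃ c ∈ S, c ∈ cNbr G v ∧ u ∉ cNbr G c := by
  by_contra! h
  have hu : u ∈ ⋂ c ∈ cNbr G v ∩ S, cNbr G c :=
    mem_iInter₂.2 fun c hc => h c hc.2 hc.1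
  rw [(hS.2 v).2] at hu
  exact huv hu

theorem exists_adj_mem_of_notMem (hS : IsSID G S) (hv : v ∉ S) (huv : u ≠ v) :
    ∃ c ∈ S, G.Adj v c ∧ u ∉ cNbr G c := by
  obtain ⟨c, hcS, hc, hu⟩ := hS.exists_mem_cNbr_notMem_cNbr huv
  rcases mem_cNbr.1 hc with rfl | hvc
  · exact absurd hcS hv
  · exact ⟨c, hcS, hvc, hu⟩

theorem exists_adj_mem_ne (hS : IsSID G S) (hvu : G.Adj v u) :
    ∃ c ∈ S, G.Adj v c ∧ c ≠ u := by
  obtain ⟨c, hcS, hc, hu⟩ := hS.exists_mem_cNbr_notMem_cNbr hvu.ne'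
  rcases mem_cNbr.1 hc with rfl | hvc
  · exact absurd (mem_cNbr.2 (Or.inr hvu)) hu
  · exact ⟨c, hcS, hvc, fun hcu => hu (mem_cNbr.2 (Or.inl hcu.symm))⟩

theorem one_lt_ncard_neighborSet_inter [Finite V] (hS : IsSID G S) (hvu : G.Adj v u) :
    1 < (G.neighborSet v ∩ S).ncard := by
  obtain ⟨c₁, hc₁S, hvc₁, -⟩ := hS.exists_adj_mem_ne hvu
  obtain ⟨c₂, hc₂S, hvc₂, hc₂⟩ := hS.exists_adj_mem_ne hvc₁
  exact (Set.one_lt_ncard_iff (Set.toFinite _)).2 ⟨c₂, c₁, ⟨hvc₂, hc₂S⟩, ⟨hvc₁, hc₁S⟩, hc₂⟩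

end IsSID

section RowCounting

variable {ι : Type*} [DecidableEq ι] {A B C : Finset ι}

theorem three_le_card_add_card [Nonempty ι] (hdeg : ∀ i, 2 ≤ #(A.erase i) + #(C.erase i)) :
    3 ≤ #A + #C := by
  obtain ⟨a, ha⟩ : (A ∪ C).Nonempty := by
    obtain ⟨i⟩ := ‹Nonempty ι›
    by_contra h
    rw [Finset.not_nonempty_iff_eq_empty, Finset.union_eq_empty] at h
    simpa [h.1, h.2] using hdeg i
  have hlt : #(A.erase a) + #(C.erase a) < #A + #C := by
    rcases Finset.mem_union.1 ha with ha | ha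
    · exact add_lt_add_of_lt_of_le (Finset.card_erase_lt_of_mem ha) Finset.card_erase_le
    · exact add_lt_add_of_le_of_lt Finset.card_erase_le (Finset.card_erase_lt_of_mem ha)
  have := hdeg a
  omega

theorem card_add_two_le_of_forall_mem_union [Fintype ι]
    (hA : ∀ i ∉ A, ∃ t ∈ B, t ≠ i) (hC : ∀ i ∉ C, ∃ t ∈ B, t ≠ i)
    (hcover : ∀ t, t ∈ A ∪ C) (h3 : 3 ≤ #A + #C) :
    Fintype.card ι + 2 ≤ #A + #B + #C := by
  have hAC : Fintype.card ι + #(A ∩ C) = #A + #C := by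
    rw [← Finset.card_union_add_card_inter, Finset.eq_univ_of_forall hcover, Finset.card_univ]
  have mem_of_subset : ∀ b, B ⊆ {b} → b ∈ A ∩ C := by
    intro b hb
    have hB : ∀ t ∈ B, t = b := fun t ht => Finset.mem_singleton.1 (hb ht)
    refine Finset.mem_inter.2 ⟨?_, ?_⟩ <;> by_contra h
    · obtain ⟨t, ht, htb⟩ := hA b h
      exact htb (hB t ht)
    · obtain ⟨t, ht, htb⟩ := hC b h
      exact htb (hB t ht)
  rcases B.eq_empty_or_nonempty with rfl | ⟨b, hb⟩
  · have := Finset.eq_univ_of_forall fun i => mem_of_subset i (Finset.empty_subset _)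
    rw [this, Finset.card_univ] at hAC
    simp only [Finset.card_empty]
    omega
  · rcases Nat.lt_or_ge 1 #B with hB | hB
    · omega
    · have hbB : B ⊆ {b} := fun t ht => Finset.mem_singleton.2 (Finset.card_le_one.1 hB t ht b hb)
      have := Finset.card_pos.2 ⟨b, hb⟩
      have := Finset.card_pos.2 ⟨b, mem_of_subset b hbB⟩
      omega

theorem card_add_two_le_card_add_card_add_card [Fintype ι] [Nonempty ι]
    (hA : ∀ i ∉ A, ∃ t ∈ B, t ≠ i) (hC : ∀ i ∉ C, ∃ t ∈ B, t ≠ i)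
    (hcov : ∀ i ∉ B, ∀ t ≠ i, t ∈ A ∪ C) (hdeg : ∀ i, 2 ≤ #(A.erase i) + #(C.erase i)) :
    Fintype.card ι + 2 ≤ #A + #B + #C := by
  have h3 := three_le_card_add_card hdeg
  rcases Nat.lt_or_ge 1 #Bᶜ with h | h
  · refine card_add_two_le_of_forall_mem_union hA hC (fun t => ?_) h3
    obtain ⟨i, hi, hit⟩ := Finset.exists_mem_ne h t
    exact hcov i (Finset.mem_compl.1 hi) t hit.symm
  · have := Finset.card_compl B
    have := B.card_le_univ
    omega

end RowCounting

theorem ZMod.natCast_ne_zero_of_pos_of_lt {n k : ℕ} (hk : 0 < k) (hkn : k < n) :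
    (k : ZMod n) ≠ 0 := by
  rw [Ne, ZMod.natCast_eq_zero_iff]
  exact Nat.not_dvd_of_pos_of_lt hk hkn

open Classical in
noncomputable def rowsIn {m n : ℕ} (S : Set (Fin m × ZMod n)) (k : ZMod n) : Finset (Fin m) :=
  Finset.univ.filter fun i => (i, k) ∈ S

@[simp]
lemma mem_rowsIn {m n : ℕ} {S : Set (Fin m × ZMod n)} {k : ZMod n} {i : Fin m} :
    i ∈ rowsIn S k ↔ (i, k) ∈ S := by
  simp [rowsIn]

namespace KmCn

variable {m n : ℕ} {S : Set (Fin m × ZMod n)} {i t : Fin m} {k : ZMod n}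

theorem exists_mem_rowsIn_succ_ne (hn : 3 ≤ n) (hS : IsSID (KmCn m n) S)
    (hi : i ∉ rowsIn S k) : ∃ t ∈ rowsIn S (k + 1), t ≠ i := by
  have h2 : (2 : ZMod n) ≠ 0 := mod_cast ZMod.natCast_ne_zero_of_pos_of_lt two_pos hn
  obtain ⟨⟨t, l⟩, hc, hadj, hsep⟩ :=
    hS.exists_adj_mem_of_notMem (mem_rowsIn.not.1 hi) (u := (i, k - 2)) (by simpa using h2)
  obtain ⟨hit, hl⟩ := hadj
  refine ⟨t, ?_, Ne.symm hit⟩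
  rcases hl with rfl | hl
  · exact mem_rowsIn.2 hc
  · exact (hsep (mem_cNbr.2 (Or.inr ⟨Ne.symm hit, Or.inr (by linear_combination -hl)⟩))).elim

theorem exists_mem_rowsIn_pred_ne (hn : 3 ≤ n) (hS : IsSID (KmCn m n) S)
    (hi : i ∉ rowsIn S k) : ∃ t ∈ rowsIn S (k - 1), t ≠ i := by
  have h2 : (2 : ZMod n) ≠ 0 := mod_cast ZMod.natCast_ne_zero_of_pos_of_lt two_pos hn
  obtain ⟨⟨t, l⟩, hc, hadj, hsep⟩ :=
    hS.exists_adj_mem_of_notMem (mem_rowsIn.not.1 hi) (u := (i, k + 2)) (by simpa using h2)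
  obtain ⟨hit, hl⟩ := hadj
  refine ⟨t, ?_, Ne.symm hit⟩
  rcases hl with rfl | hl
  · exact (hsep (mem_cNbr.2 (Or.inr ⟨Ne.symm hit, Or.inl (by ring)⟩))).elim
  · rwa [← eq_sub_of_add_eq hl, mem_rowsIn]

theorem mem_rowsIn_pred_union_succ (hS : IsSID (KmCn m n) S) (hi : i ∉ rowsIn S k)
    (hti : t ≠ i) : t ∈ rowsIn S (k - 1) ∪ rowsIn S (k + 1) := by
  obtain ⟨⟨s, l⟩, hc, ⟨-, hl⟩, hsep⟩ :=
    hS.exists_adj_mem_of_notMem (mem_rowsIn.not.1 hi) (u := (t, k)) (by simpa using hti)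
  obtain rfl : s = t := by
    by_contra hst
    exact hsep (mem_cNbr.2 (Or.inr ⟨hst, hl.symm⟩))
  rcases hl with rfl | hl
  · exact Finset.mem_union_right _ (mem_rowsIn.2 hc)
  · rw [← eq_sub_of_add_eq hl]
    exact Finset.mem_union_left _ (mem_rowsIn.2 hc)

theorem two_le_card_erase_add_card_erase [NeZero n] (hm : 2 ≤ m) (hS : IsSID (KmCn m n) S)
    (k : ZMod n) (i : Fin m) :
    2 ≤ #((rowsIn S (k - 1)).erase i) + #((rowsIn S (k + 1)).erase i) := by
  have : Nontrivial (Fin m) := Fin.nontrivial_iff_two_le.2 hm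
  obtain ⟨t, hti⟩ := exists_ne i
  have hsub : (KmCn m n).neighborSet (i, k) ∩ S ⊆
      (fun r => (r, k - 1)) '' ↑((rowsIn S (k - 1)).erase i) ∪
        (fun r => (r, k + 1)) '' ↑((rowsIn S (k + 1)).erase i) := by
    rintro ⟨r, l⟩ ⟨⟨hir, hl⟩, hrS⟩
    rcases hl with rfl | hl
    · exact Or.inr ⟨r, by simp [hrS, Ne.symm hir], rfl⟩
    · obtain rfl := eq_sub_of_add_eq hl
      exact Or.inl ⟨r, by simp [hrS, Ne.symm hir], rfl⟩
  calc 2 ≤ ((KmCn m n).neighborSet (i, k) ∩ S).ncard :=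
        hS.one_lt_ncard_neighborSet_inter (u := (t, k + 1)) ⟨hti.symm, Or.inl rfl⟩
    _ ≤ _ := Set.ncard_le_ncard hsub
    _ ≤ _ := Set.ncard_union_le _ _
    _ ≤ _ := add_le_add Set.ncard_image_le Set.ncard_image_le
    _ = _ := by rw [Set.ncard_coe_finset, Set.ncard_coe_finset]

theorem ncard_column_inter (S : Set (Fin m × ZMod n)) (k : ZMod n) :
    ({p : Fin m × ZMod n | p.2 = k} ∩ S).ncard = #(rowsIn S k) := by
  have : {p : Fin m × ZMod n | p.2 = k} ∩ S = (fun i => (i, k)) '' ↑(rowsIn S k) := by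
    ext ⟨i, l⟩
    constructor
    · rintro ⟨rfl, h⟩
      exact ⟨i, mem_rowsIn.2 h, rfl⟩
    · rintro ⟨i, h, ⟨⟩⟩
      exact ⟨rfl, mem_rowsIn.1 h⟩
  rw [this, Set.ncard_image_of_injective _ fun a b h => congrArg Prod.fst h, Set.ncard_coe_finset]

theorem ncard_three_columns_inter (hn : 3 ≤ n) (S : Set (Fin m × ZMod n)) (j : ZMod n) :
    (({p : Fin m × ZMod n | p.2 = j - 1} ∪ {p | p.2 = j} ∪ {p | p.2 = j + 1}) ∩ S).ncard =
      #(rowsIn S (j - 1)) + #(rowsIn S j) + #(rowsIn S (j + 1)) := by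
  have : NeZero n := ⟨by omega⟩
  have h1 : (1 : ZMod n) ≠ 0 := mod_cast ZMod.natCast_ne_zero_of_pos_of_lt one_pos (by omega)
  have h2 : (2 : ZMod n) ≠ 0 := mod_cast ZMod.natCast_ne_zero_of_pos_of_lt two_pos hn
  have disjoint_columns {k l : ZMod n} (hkl : k ≠ l) :
      Disjoint ({p : Fin m × ZMod n | p.2 = k} ∩ S) ({p | p.2 = l} ∩ S) :=
    Set.disjoint_left.2 fun p hp hq => hkl ((hp.1 : p.2 = k).symm.trans hq.1)
  rw [Set.union_inter_distrib_right, Set.union_inter_distrib_right,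
    Set.ncard_union_eq (Set.disjoint_union_left.2
      ⟨disjoint_columns fun h => h2 (by linear_combination -h),
        disjoint_columns (add_ne_left.2 h1).symm⟩),
    Set.ncard_union_eq (disjoint_columns (sub_eq_self.not.2 h1)),
    ncard_column_inter, ncard_column_inter, ncard_column_inter]

end KmCn

theorem stmt15 (m n : ℕ) (hm : 3 ≤ m) (hn : 3 ≤ n) (S : Set (Fin m × ZMod n))
    (hS : IsSID (KmCn m n) S) (j : ZMod n) :
    m + 2 ≤ (({p : Fin m × ZMod n | p.2 = j - 1} ∪
        {p : Fin m × ZMod n | p.2 = j} ∪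
        {p : Fin m × ZMod n | p.2 = j + 1}) ∩ S).ncard := by
  have : NeZero n := ⟨by omega⟩
  have : Nonempty (Fin m) := ⟨⟨0, by omega⟩⟩
  have hA : ∀ i ∉ rowsIn S (j - 1), ∃ t ∈ rowsIn S j, t ≠ i := fun i hi => by
    simpa only [sub_add_cancel] using KmCn.exists_mem_rowsIn_succ_ne hn hS hi
  have hC : ∀ i ∉ rowsIn S (j + 1), ∃ t ∈ rowsIn S j, t ≠ i := fun i hi => by
    simpa only [add_sub_cancel_right] using KmCn.exists_mem_rowsIn_pred_ne hn hS hi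
  have hcount := card_add_two_le_card_add_card_add_card hA hC
    (fun i hi t hti => KmCn.mem_rowsIn_pred_union_succ hS hi hti)
    (KmCn.two_le_card_erase_add_card_erase (by omega) hS j)
  rw [KmCn.ncard_three_columns_inter hn]
  simpa using hcount
end
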